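/- arXiv:2302.08929 — 10 statements merged into one kernel-verified Lean document; each statement's English description precedes it below -/
import Mathlib

section
/- Let m be a natural number, let c : Fin m → ℝ be strictly increasing, and let ℓ ≤ u be real numbers. For x ∈ ℝ define the tie-broken ranking relation R_x on Fin m by: R_x i j holds iff |x − c i| < |x − c j|, or (|x − c i| = |x − c j| and i ≤ j). Then the set { R_x : x ∈ [ℓ, u] } of relations is finite and has at most m(m−1)/2 + 1 elements. -/
/-!
Between two candidates `c i < c j` the voter at `x` prefers `i` exactly when `x` lies left of
the midpoint `(c i + c j) / 2` (ties at the midpoint go to the smaller index). So the ranking at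
`x` depends only on which of the at most `m(m-1)/2` midpoints lie at or to the right of `x`,
and this set of midpoints is determined by its size, a number between `0` and `m(m-1)/2`.
-/

open Finset Function

theorem Function.FactorsThrough.image_finite_and_ncard_le {α β γ : Type*} {f : α → β}
    {g : α → γ} (hfg : f.FactorsThrough g) {s : Set α} (hs : (g '' s).Finite) :
    (f '' s).Finite ∧ (f '' s).ncard ≤ (g '' s).ncard := by
  rcases s.eq_empty_or_nonempty with rfl | ⟨a, -⟩
  · simp
  have hfs : f '' s = extend g f (fun _ => f a) '' (g '' s) := by
    rw [Set.image_image]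
    exact Set.image_congr fun x _ => (hfg.extend_apply _ x).symm
  exact hfs ▸ ⟨hs.image _, Set.ncard_image_le hs⟩

theorem Finset.image_card_filter_le_subset_range {α : Type*} [Preorder α]
    [DecidableRel (α := α) (· ≤ ·)] (M : Finset α) (s : Set α) :
    (fun x => #{t ∈ M | x ≤ t}) '' s ⊆ range (#M + 1) := by
  rintro _ ⟨x, -, rfl⟩
  exact mem_range_succ_iff.2 (card_filter_le _ _)

theorem Finset.le_iff_le_of_card_filter_le_eq {α : Type*} [LinearOrder α] {M : Finset α}
    {x y : α} (h : #{t ∈ M | x ≤ t} = #{t ∈ M | y ≤ t}) {t : α} (ht : t ∈ M) :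
    x ≤ t ↔ y ≤ t := by
  wlog hxy : x ≤ y generalizing x y
  · exact (this h.symm (le_of_not_ge hxy)).symm
  have hsub : {t ∈ M | y ≤ t} ⊆ {t ∈ M | x ≤ t} :=
    monotone_filter_right _ fun _ _ => hxy.trans
  have heq := eq_of_subset_of_card_le hsub h.le
  refine ⟨fun hxt => ?_, hxy.trans⟩
  have : t ∈ {t ∈ M | x ≤ t} := mem_filter.2 ⟨ht, hxt⟩
  exact (mem_filter.1 (heq ▸ this)).2

theorem abs_sub_lt_abs_sub_iff_lt_midpoint {a b x : ℝ} (hab : a < b) :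
    |x - a| < |x - b| ↔ x < (a + b) / 2 := by
  rcases abs_cases (x - a) with ⟨h1, h2⟩ | ⟨h1, h2⟩ <;>
    rcases abs_cases (x - b) with ⟨h3, h4⟩ | ⟨h3, h4⟩ <;>
    constructor <;> intro h <;> linarith

theorem abs_sub_eq_abs_sub_iff_eq_midpoint {a b x : ℝ} (hab : a < b) :
    |x - a| = |x - b| ↔ x = (a + b) / 2 := by
  rcases abs_cases (x - a) with ⟨h1, h2⟩ | ⟨h1, h2⟩ <;>
    rcases abs_cases (x - b) with ⟨h3, h4⟩ | ⟨h3, h4⟩ <;>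
    constructor <;> intro h <;> linarith

namespace SpatialVote

variable {ι : Type*} (c : ι → ℝ)

noncomputable def midpoints [Fintype ι] : Finset ℝ :=
  (univ.powersetCard 2).image fun s => (∑ i ∈ s, c i) / 2

theorem midpoint_mem_midpoints [Fintype ι] [DecidableEq ι] {i j : ι} (hij : i ≠ j) :
    (c i + c j) / 2 ∈ midpoints c :=
  mem_image.2 ⟨{i, j}, mem_powersetCard.2 ⟨subset_univ _, card_pair hij⟩, by rw [sum_pair hij]⟩

theorem card_midpoints_le [Fintype ι] : #(midpoints c) ≤ (Fintype.card ι).choose 2 :=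
  card_image_le.trans (card_powersetCard 2 _).le

variable [LinearOrder ι]

def rankingAt (x : ℝ) (i j : ι) : Prop :=
  |x - c i| < |x - c j| ∨ (|x - c i| = |x - c j| ∧ i ≤ j)

theorem rankingAt_iff_not_rankingAt {x : ℝ} {i j : ι} (hij : i ≠ j) :
    rankingAt c x i j ↔ ¬ rankingAt c x j i := by
  unfold rankingAt
  grind

variable {c}

theorem rankingAt_iff_le_midpoint (hc : StrictMono c) {x : ℝ} {i j : ι} (hij : i < j) :
    rankingAt c x i j ↔ x ≤ (c i + c j) / 2 := by
  rw [rankingAt, abs_sub_lt_abs_sub_iff_lt_midpoint (hc hij),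
    abs_sub_eq_abs_sub_iff_eq_midpoint (hc hij), and_iff_left hij.le, le_iff_lt_or_eq]

theorem rankingAt_eq_of_forall_midpoint (hc : StrictMono c) {x y : ℝ}
    (h : ∀ i j, i < j → (x ≤ (c i + c j) / 2 ↔ y ≤ (c i + c j) / 2)) :
    rankingAt c x = rankingAt c y := by
  have hlt : ∀ i j, i < j → (rankingAt c x i j ↔ rankingAt c y i j) := fun i j hij => by
    rw [rankingAt_iff_le_midpoint hc hij, rankingAt_iff_le_midpoint hc hij, h i j hij]
  funext i j
  rcases lt_trichotomy i j with hij | rfl | hij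
  · exact propext (hlt i j hij)
  · simp [rankingAt]
  · rw [rankingAt_iff_not_rankingAt c hij.ne', rankingAt_iff_not_rankingAt c hij.ne',
      hlt j i hij]

theorem rankingAt_factorsThrough [Fintype ι] (hc : StrictMono c) :
    (rankingAt c).FactorsThrough fun x => #{t ∈ midpoints c | x ≤ t} := fun _ _ h =>
  rankingAt_eq_of_forall_midpoint hc fun _ _ hij =>
    le_iff_le_of_card_filter_le_eq h (midpoint_mem_midpoints c hij.ne)

end SpatialVote

open SpatialVote in
theorem one_dim_partial_vote_rankings_finite_card_le_general
    (m : ℕ) (c : Fin m → ℝ) (hc : StrictMono c) (ℓ u : ℝ) :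
    ({R : Fin m → Fin m → Prop | ∃ x ∈ Set.Icc ℓ u,
        R = fun i j => |x - c i| < |x - c j| ∨ (|x - c i| = |x - c j| ∧ i ≤ j)}).Finite ∧
    ({R : Fin m → Fin m → Prop | ∃ x ∈ Set.Icc ℓ u,
        R = fun i j => |x - c i| < |x - c j| ∨ (|x - c i| = |x - c j| ∧ i ≤ j)}).ncard
      ≤ m * (m - 1) / 2 + 1 := by
  have hset : {R : Fin m → Fin m → Prop | ∃ x ∈ Set.Icc ℓ u,
      R = fun i j => |x - c i| < |x - c j| ∨ (|x - c i| = |x - c j| ∧ i ≤ j)} =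
      rankingAt c '' Set.Icc ℓ u := by
    ext R
    exact exists_congr fun x => and_congr_right fun _ => eq_comm
  have hcounts := image_card_filter_le_subset_range (midpoints c) (Set.Icc ℓ u)
  obtain ⟨hfin, hle⟩ := (rankingAt_factorsThrough hc).image_finite_and_ncard_le
    ((finite_toSet _).subset hcounts)
  have hcard := Set.ncard_le_ncard hcounts (finite_toSet _)
  rw [Set.ncard_coe_finset, card_range] at hcard
  have hmid := card_midpoints_le c
  rw [Fintype.card_fin, Nat.choose_two_right] at hmid
  rw [hset]
  exact ⟨hfin, by omega⟩

/-- Lemma 4.2: a one-dimensional partial spatial vote with interval `[ℓ, u]` has at most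
`m(m-1)/2 + 1` ranking completions, where the (tie-broken) ranking relation induced by
position `x` ranks `i` before `j` iff `|x - c i| < |x - c j|`, or the distances are equal
and `i ≤ j`. -/
theorem one_dim_partial_vote_rankings_finite_card_le
    (m : ℕ) (c : Fin m → ℝ) (hc : StrictMono c) (ℓ u : ℝ) (hlu : ℓ ≤ u) :
    ({R : Fin m → Fin m → Prop | ∃ x ∈ Set.Icc ℓ u,
        R = fun i j => |x - c i| < |x - c j| ∨ (|x - c i| = |x - c j| ∧ i ≤ j)}).Finite ∧
    ({R : Fin m → Fin m → Prop | ∃ x ∈ Set.Icc ℓ u,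
        R = fun i j => |x - c i| < |x - c j| ∨ (|x - c i| = |x - c j| ∧ i ≤ j)}).ncard
      ≤ m * (m - 1) / 2 + 1 :=
  one_dim_partial_vote_rankings_finite_card_le_general m c hc ℓ u
end

section
/- Let d, m be natural numbers and let c : Fin m → EuclideanSpace ℝ (Fin d) be injective. Consider the set of comparison patterns { p : Fin m → Fin m → Prop | there exists x ∈ EuclideanSpace ℝ (Fin d) such that ‖x − c i‖ ≠ ‖x − c j‖ for all i ≠ j, and p i j ↔ ‖x − c i‖ < ‖x − c j‖ for all i, j }. This set is finite and has at most ∑_{i=0}^{d} binom(m(m−1)/2, i) elements. -/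
/-!
A tie-free point's comparison pattern is determined by the signs, at that point, of the affine
functionals `x ↦ ‖x - c j‖² - ‖x - c i‖²` (`i < j`), so it suffices to count the sign vectors
realized by `N` affine functionals on a `d`-dimensional space. Removing one functional `f`, a sign
vector of the others has two extensions only if its cell, which is convex, meets the hyperplane
`f = 0`; there it is a sign vector of the `N - 1` restricted functionals on a `(d-1)`-dimensional
space. Induction on `N` with Pascal's rule gives `∑_{i ≤ d} C(N, i)`.
-/

open Finset Module

theorem sum_range_choose_succ_eq_add (n d : ℕ) :
    ∑ i ∈ range (d + 1), (n + 1).choose i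
      = ∑ i ∈ range (d + 1), n.choose i + ∑ i ∈ range d, n.choose i := by
  rw [sum_range_succ', sum_range_succ' (fun i => n.choose i)]
  simp only [Nat.choose_succ_succ, sum_add_distrib, Nat.choose_zero_right]
  ring

theorem ncard_eq_ncard_union_add_ncard_inter_cons {n : ℕ} (S : Set (Fin (n + 1) → Bool)) :
    S.ncard = ({t | Fin.cons true t ∈ S} ∪ {t | Fin.cons false t ∈ S}).ncard
      + ({t | Fin.cons true t ∈ S} ∩ {t | Fin.cons false t ∈ S}).ncard := by
  set A : Bool → Set (Fin n → Bool) := fun β => {t | Fin.cons β t ∈ S}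
  set cons : Bool → (Fin n → Bool) → Fin (n + 1) → Bool := fun β t => Fin.cons β t
  have hS : S = cons true '' A true ∪ cons false '' A false := by
    ext s
    rw [← Fin.cons_self_tail s]
    cases s 0 <;> simp [A, cons]
  have hdisj : Disjoint (cons true '' A true) (cons false '' A false) := by
    rw [Set.disjoint_left]
    rintro _ ⟨t, -, rfl⟩ ⟨t', -, h⟩
    simpa [cons] using congrFun h 0
  rw [Set.ncard_union_add_ncard_inter]
  calc S.ncard = (cons true '' A true ∪ cons false '' A false).ncard := congrArg _ hS
    _ = (A true).ncard + (A false).ncard := by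
      have hinj : ∀ β, Function.Injective (cons β) :=
        fun β => Fin.cons_right_injective (α := fun _ => Bool) β
      rw [Set.ncard_union_eq hdisj, Set.ncard_image_of_injective _ (hinj _),
        Set.ncard_image_of_injective _ (hinj _)]

section SignPatterns

variable {V : Type*} [AddCommGroup V] [Module ℝ V] {ι κ : Type*}

def IsSignPatternAt (a : ι → V →ₗ[ℝ] ℝ) (b : ι → ℝ) (x : V) (s : ι → Bool) : Prop :=
  ∀ k, if s k then 0 < a k x + b k else a k x + b k < 0

def signPatterns (a : ι → V →ₗ[ℝ] ℝ) (b : ι → ℝ) : Set (ι → Bool) :=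
  {s | ∃ x, IsSignPatternAt a b x s}

variable {a : ι → V →ₗ[ℝ] ℝ} {b : ι → ℝ} {x y : V} {s : ι → Bool}

theorem IsSignPatternAt.comp (h : IsSignPatternAt a b x s) (f : κ → ι) :
    IsSignPatternAt (a ∘ f) (b ∘ f) x (s ∘ f) :=
  fun k => h (f k)

theorem IsSignPatternAt.smul_add_smul (hx : IsSignPatternAt a b x s) (hy : IsSignPatternAt a b y s)
    {θ φ : ℝ} (hθ : 0 < θ) (hφ : 0 < φ) (hθφ : θ + φ = 1) :
    IsSignPatternAt a b (θ • x + φ • y) s := by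
  intro k
  have hk : a k (θ • x + φ • y) + b k = θ * (a k x + b k) + φ * (a k y + b k) := by
    simp only [map_add, map_smul, smul_eq_mul]
    linear_combination (b k) * hθφ.symm
  have hxk := hx k
  have hyk := hy k
  rw [hk]
  split_ifs at hxk hyk ⊢
  · positivity
  · nlinarith

theorem IsSignPatternAt.tail {n : ℕ} {a : Fin (n + 1) → V →ₗ[ℝ] ℝ} {b : Fin (n + 1) → ℝ}
    {β : Bool} {t : Fin n → Bool} (h : IsSignPatternAt a b x (Fin.cons β t)) :
    IsSignPatternAt (Fin.tail a) (Fin.tail b) x t :=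
  fun k => by simpa [Fin.tail] using h k.succ

theorem isSignPatternAt_domRestrict_iff (K : Submodule ℝ V) (x₀ : V) (y : K) :
    IsSignPatternAt (fun k => (a k).domRestrict K) (fun k => a k x₀ + b k) y s
      ↔ IsSignPatternAt a b (x₀ + y) s := by
  refine forall_congr' fun k => ?_
  rw [LinearMap.domRestrict_apply, map_add, add_comm (a k x₀), add_assoc]

theorem exists_isSignPatternAt_tail_of_cons {n : ℕ} {a : Fin (n + 1) → V →ₗ[ℝ] ℝ}
    {b : Fin (n + 1) → ℝ} {t : Fin n → Bool}
    (hx : IsSignPatternAt a b x (Fin.cons true t)) (hy : IsSignPatternAt a b y (Fin.cons false t)) :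
    ∃ z, a 0 z + b 0 = 0 ∧ IsSignPatternAt (Fin.tail a) (Fin.tail b) z t := by
  set α := a 0 x + b 0
  set β := -(a 0 y + b 0)
  have hα : 0 < α := by simpa using hx 0
  have hβ : 0 < β := by simpa [β, lt_neg_iff_add_neg] using hy 0
  refine ⟨(β / (α + β)) • x + (α / (α + β)) • y, ?_, ?_⟩
  · simp only [map_add, map_smul, smul_eq_mul]
    field_simp
    ring
  · exact hx.tail.smul_add_smul hy.tail (by positivity) (by positivity) (by field_simp; ring)

theorem ncard_signPatterns_fin_le [FiniteDimensional ℝ V] {n : ℕ} (a : Fin n → V →ₗ[ℝ] ℝ)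
    (b : Fin n → ℝ) : (signPatterns a b).ncard ≤ ∑ i ∈ range (finrank ℝ V + 1), n.choose i := by
  induction n generalizing V with
  | zero =>
    calc (signPatterns a b).ncard ≤ Nat.card (Fin 0 → Bool) := Set.ncard_le_card _
      _ = 1 := by simp
      _ ≤ _ := by simp [sum_range_succ']
  | succ n ih =>
    set A := {t | Fin.cons true t ∈ signPatterns a b}
    set A' := {t | Fin.cons false t ∈ signPatterns a b}
    have hunion : A ∪ A' ⊆ signPatterns (Fin.tail a) (Fin.tail b) := by
      rintro t (⟨x, hx⟩ | ⟨x, hx⟩) <;> exact ⟨x, hx.tail⟩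
    have hinter : (A ∩ A').ncard ≤ ∑ i ∈ range (finrank ℝ V), n.choose i := by
      by_cases h0 : a 0 = 0
      · have hempty : A ∩ A' = ∅ := by
          refine Set.eq_empty_iff_forall_notMem.2 ?_
          rintro t ⟨⟨x, hx⟩, ⟨y, hy⟩⟩
          have hx0 : 0 < b 0 := by simpa [h0] using hx 0
          have hy0 : b 0 < 0 := by simpa [h0] using hy 0
          exact hx0.not_gt hy0
        simp [hempty]
      · obtain ⟨x₀, hx₀⟩ := LinearMap.surjective h0 (-b 0)
        rw [← Module.Dual.finrank_ker_add_one_of_ne_zero h0]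
        refine (Set.ncard_le_ncard ?_ (Set.toFinite _)).trans (ih
          (fun k => (Fin.tail a k).domRestrict (LinearMap.ker (a 0)))
          (fun k => Fin.tail a k x₀ + Fin.tail b k))
        rintro t ⟨⟨x, hx⟩, ⟨y, hy⟩⟩
        obtain ⟨z, hz, hzt⟩ := exists_isSignPatternAt_tail_of_cons hx hy
        have hzx₀ : z - x₀ ∈ LinearMap.ker (a 0) := by
          rw [LinearMap.mem_ker, map_sub, hx₀]
          linarith
        refine ⟨⟨z - x₀, hzx₀⟩, ?_⟩
        rw [isSignPatternAt_domRestrict_iff, Submodule.coe_mk, add_sub_cancel]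
        exact hzt
    calc (signPatterns a b).ncard = (A ∪ A').ncard + (A ∩ A').ncard :=
          ncard_eq_ncard_union_add_ncard_inter_cons _
      _ ≤ ∑ i ∈ range (finrank ℝ V + 1), n.choose i + ∑ i ∈ range (finrank ℝ V), n.choose i :=
          add_le_add ((Set.ncard_le_ncard hunion (Set.toFinite _)).trans (ih _ _)) hinter
      _ = _ := (sum_range_choose_succ_eq_add n _).symm

theorem ncard_signPatterns_le [Fintype ι] [FiniteDimensional ℝ V] (a : ι → V →ₗ[ℝ] ℝ)
    (b : ι → ℝ) :
    (signPatterns a b).ncard ≤ ∑ i ∈ range (finrank ℝ V + 1), (Fintype.card ι).choose i := by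
  set e := Fintype.equivFin ι
  calc (signPatterns a b).ncard ≤ (signPatterns (a ∘ e.symm) (b ∘ e.symm)).ncard :=
        Set.ncard_le_ncard_of_injOn (· ∘ e.symm) (fun _ ⟨x, hx⟩ => ⟨x, hx.comp e.symm⟩)
          e.symm.surjective.injective_comp_right.injOn (Set.toFinite _)
    _ ≤ _ := ncard_signPatterns_fin_le _ _

end SignPatterns

section Comparison

variable {E : Type*} [NormedAddCommGroup E] {ι : Type*}

def comparisonPatterns (c : ι → E) : Set (ι → ι → Prop) :=
  {p | ∃ x, (∀ i j, i ≠ j → ‖x - c i‖ ≠ ‖x - c j‖) ∧ ∀ i j, p i j ↔ ‖x - c i‖ < ‖x - c j‖}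

variable {c : ι → E} {p : ι → ι → Prop}

theorem irrefl_of_mem_comparisonPatterns (hp : p ∈ comparisonPatterns c) (i : ι) : ¬p i i := by
  obtain ⟨x, -, hp⟩ := hp
  simp [hp]

theorem swap_iff_of_mem_comparisonPatterns (hp : p ∈ comparisonPatterns c) {i j : ι}
    (hij : i ≠ j) : p j i ↔ ¬p i j := by
  obtain ⟨x, htie, hp⟩ := hp
  rw [hp, hp, not_lt]
  exact ⟨le_of_lt, fun h => lt_of_le_of_ne h (htie j i hij.symm)⟩

variable [LinearOrder ι]

open Classical in
noncomputable def toPairSigns (p : ι → ι → Prop) (q : {q : ι × ι // q.1 < q.2}) : Bool :=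
  decide (p q.1.1 q.1.2)

theorem injOn_toPairSigns_comparisonPatterns (c : ι → E) :
    Set.InjOn toPairSigns (comparisonPatterns c) := by
  intro p hp p' hp' h
  have hlt : ∀ i j, i < j → (p i j ↔ p' i j) := fun i j hij => by
    simpa [toPairSigns] using congrFun h ⟨(i, j), hij⟩
  funext i j
  apply propext
  rcases lt_trichotomy i j with hij | rfl | hij
  · exact hlt i j hij
  · exact iff_of_false (irrefl_of_mem_comparisonPatterns hp i)
      (irrefl_of_mem_comparisonPatterns hp' i)
  · rw [swap_iff_of_mem_comparisonPatterns hp hij.ne,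
      swap_iff_of_mem_comparisonPatterns hp' hij.ne, hlt j i hij]

variable [InnerProductSpace ℝ E]

noncomputable def bisectorForm (u v : E) : E →ₗ[ℝ] ℝ := (2 : ℝ) • innerₛₗ ℝ (u - v)

theorem bisectorForm_apply_add (u v x : E) :
    bisectorForm u v x + (‖v‖ ^ 2 - ‖u‖ ^ 2) = ‖x - v‖ ^ 2 - ‖x - u‖ ^ 2 := by
  simp only [bisectorForm, LinearMap.smul_apply, innerₛₗ_apply_apply, smul_eq_mul,
    norm_sub_sq_real, real_inner_comm x, inner_sub_right]
  ring

theorem bisectorForm_apply_add_pos_iff (u v x : E) :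
    0 < bisectorForm u v x + (‖v‖ ^ 2 - ‖u‖ ^ 2) ↔ ‖x - u‖ < ‖x - v‖ := by
  rw [bisectorForm_apply_add, sub_pos, sq_lt_sq₀ (norm_nonneg _) (norm_nonneg _)]

theorem bisectorForm_apply_add_neg_iff (u v x : E) :
    bisectorForm u v x + (‖v‖ ^ 2 - ‖u‖ ^ 2) < 0 ↔ ‖x - v‖ < ‖x - u‖ := by
  rw [bisectorForm_apply_add, sub_neg, sq_lt_sq₀ (norm_nonneg _) (norm_nonneg _)]

theorem mapsTo_toPairSigns_comparisonPatterns (c : ι → E) :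
    Set.MapsTo toPairSigns (comparisonPatterns c)
      (signPatterns (fun q : {q : ι × ι // q.1 < q.2} => bisectorForm (c q.1.1) (c q.1.2))
        (fun q => ‖c q.1.2‖ ^ 2 - ‖c q.1.1‖ ^ 2)) := by
  intro p hp
  obtain ⟨x, htie, hpx⟩ := id hp
  refine ⟨x, fun ⟨(i, j), hij⟩ => ?_⟩
  by_cases hpij : p i j
  · simpa [toPairSigns, hpij, bisectorForm_apply_add_pos_iff] using (hpx i j).1 hpij
  · have hji : p j i := (swap_iff_of_mem_comparisonPatterns hp hij.ne).2 hpij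
    simpa [toPairSigns, hpij, bisectorForm_apply_add_neg_iff] using (hpx j i).1 hji

theorem ncard_comparisonPatterns_le [Fintype ι] [FiniteDimensional ℝ E] (c : ι → E) :
    (comparisonPatterns c).ncard
      ≤ ∑ i ∈ range (finrank ℝ E + 1), ((Fintype.card ι).choose 2).choose i := by
  have hpairs : Fintype.card {q : ι × ι // q.1 < q.2} = (Fintype.card ι).choose 2 := by
    rw [Fintype.card_subtype, Fintype.card_product_filter_lt]
  rw [← hpairs]
  exact (Set.ncard_le_ncard_of_injOn _ (mapsTo_toPairSigns_comparisonPatterns c)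
    (injOn_toPairSigns_comparisonPatterns c) (Set.toFinite _)).trans (ncard_signPatterns_le _ _)

end Comparison

theorem comparison_patterns_finite_card_le_cells_general
    (d m : ℕ) (c : Fin m → EuclideanSpace ℝ (Fin d)) :
    ({p : Fin m → Fin m → Prop | ∃ x : EuclideanSpace ℝ (Fin d),
        (∀ i j : Fin m, i ≠ j → ‖x - c i‖ ≠ ‖x - c j‖) ∧
        (∀ i j : Fin m, p i j ↔ ‖x - c i‖ < ‖x - c j‖)}).Finite ∧
    ({p : Fin m → Fin m → Prop | ∃ x : EuclideanSpace ℝ (Fin d),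
        (∀ i j : Fin m, i ≠ j → ‖x - c i‖ ≠ ‖x - c j‖) ∧
        (∀ i j : Fin m, p i j ↔ ‖x - c i‖ < ‖x - c j‖)}).ncard
      ≤ ∑ i ∈ Finset.range (d + 1), Nat.choose (m * (m - 1) / 2) i := by
  refine ⟨Set.toFinite _, ?_⟩
  have h := ncard_comparisonPatterns_le c
  rwa [finrank_euclideanSpace_fin, Fintype.card_fin, Nat.choose_two_right] at h

/-- Lemma 4.3 (exact cell-count bound): the strict distance-comparison patterns realized by
tie-free points in `ℝ^d` with respect to `m` pairwise-distinct candidate positions number at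
most `∑_{i=0}^{d} C(m(m-1)/2, i)`. -/
theorem comparison_patterns_finite_card_le_cells
    (d m : ℕ) (c : Fin m → EuclideanSpace ℝ (Fin d)) (hc : Function.Injective c) :
    ({p : Fin m → Fin m → Prop | ∃ x : EuclideanSpace ℝ (Fin d),
        (∀ i j : Fin m, i ≠ j → ‖x - c i‖ ≠ ‖x - c j‖) ∧
        (∀ i j : Fin m, p i j ↔ ‖x - c i‖ < ‖x - c j‖)}).Finite ∧
    ({p : Fin m → Fin m → Prop | ∃ x : EuclideanSpace ℝ (Fin d),
        (∀ i j : Fin m, i ≠ j → ‖x - c i‖ ≠ ‖x - c j‖) ∧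
        (∀ i j : Fin m, p i j ↔ ‖x - c i‖ < ‖x - c j‖)}).ncard
      ≤ ∑ i ∈ Finset.range (d + 1), Nat.choose (m * (m - 1) / 2) i :=
  comparison_patterns_finite_card_le_cells_general d m c
end

section
/- Let d be a natural number and m ≥ 2, and let c : Fin m → EuclideanSpace ℝ (Fin d) be injective. Consider the set of comparison patterns { p : Fin m → Fin m → Prop | there exists x ∈ EuclideanSpace ℝ (Fin d) such that ‖x − c i‖ ≠ ‖x − c j‖ for all i ≠ j, and p i j ↔ ‖x − c i‖ < ‖x − c j‖ for all i, j }. This set is finite and has at most (d+1) · (m(m−1))^d elements. -/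
/-!
`‖x - c i‖ < ‖x - c j‖` says that the affine function `x ↦ ‖x - c j‖² - ‖x - c i‖²` is positive, so
the comparison patterns are sign patterns of `m(m-1)` affine functions `g_t` on `ℝ^d`. These sign
patterns shatter no `d + 1` of the functions: the linear parts would satisfy a relation
`∑ aₜ • linear gₜ = 0` with `a ≠ 0`, making `∑ aₜ gₜ` a constant `B`; a point realising the signs
of `a` gives `B ≥ 0`, one realising the signs of `-a` gives `B ≤ 0`, and one of the two is strict.
The Sauer–Shelah lemma (Pajor's form) then bounds the number of patterns by
`∑_{k ≤ d} C(m(m-1), k) ≤ (d + 1) (m(m-1))^d`.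
-/

open Finset Module

section AffineSigns

variable {𝕜 E ι : Type*} [Field 𝕜] [AddCommGroup E] [Module 𝕜 E]

lemma sum_mul_apply_eq_of_sum_smul_linear_eq_zero (g : ι → E →ᵃ[𝕜] 𝕜) {s : Finset ι}
    {a : ι → 𝕜} (ha : ∑ t ∈ s, a t • (g t).linear = 0) (x : E) :
    ∑ t ∈ s, a t * g t x = ∑ t ∈ s, a t * g t 0 := by
  have hlin : ∑ t ∈ s, a t * (g t).linear x = 0 := by
    simpa using congrArg (fun φ : E →ₗ[𝕜] 𝕜 => φ x) ha
  have hdecomp : ∀ t, g t x = (g t).linear x + g t 0 := fun t => congrFun (g t).decomp x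
  simp only [hdecomp, mul_add, sum_add_distrib, hlin, zero_add]

variable [LinearOrder 𝕜]

def positivityPattern [Fintype ι] (g : ι → E →ᵃ[𝕜] 𝕜) (x : E) : Finset ι := {t | 0 < g t x}

lemma exists_pos_iff_of_shatters [Fintype ι] [DecidableEq ι] {g : ι → E →ᵃ[𝕜] 𝕜}
    {𝒜 : Finset (Finset ι)} (h𝒜 : ↑𝒜 ⊆ Set.range (positivityPattern g)) {s : Finset ι}
    (hs : 𝒜.Shatters s) (a : ι → 𝕜) : ∃ x, ∀ t ∈ s, 0 < g t x ↔ 0 < a t := by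
  obtain ⟨u, hu𝒜, hsu⟩ := hs (filter_subset (fun t => 0 < a t) s)
  obtain ⟨x, rfl⟩ := h𝒜 hu𝒜
  refine ⟨x, fun t ht => ?_⟩
  simpa [positivityPattern, ht] using congrArg (t ∈ ·) hsu

variable [IsStrictOrderedRing 𝕜]

lemma mul_nonneg_of_pos_iff {a b : 𝕜} (h : 0 < b ↔ 0 < a) : 0 ≤ a * b := by
  rcases lt_or_ge 0 a with ha | ha
  · exact (mul_pos ha (h.2 ha)).le
  · exact mul_nonneg_of_nonpos_of_nonpos ha (not_lt.1 fun hb => (h.1 hb).not_ge ha)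

lemma sum_mul_pos_of_pos_iff {s : Finset ι} {a f : ι → 𝕜} (h : ∀ t ∈ s, 0 < f t ↔ 0 < a t)
    (hpos : ∃ t ∈ s, 0 < a t) : 0 < ∑ t ∈ s, a t * f t := by
  obtain ⟨t, ht, hat⟩ := hpos
  exact sum_pos' (fun t ht => mul_nonneg_of_pos_iff (h t ht)) ⟨t, ht, mul_pos hat ((h t ht).2 hat)⟩

theorem card_le_finrank_of_shatters [Fintype ι] [DecidableEq ι] [FiniteDimensional 𝕜 E]
    {g : ι → E →ᵃ[𝕜] 𝕜} {𝒜 : Finset (Finset ι)} (h𝒜 : ↑𝒜 ⊆ Set.range (positivityPattern g))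
    {s : Finset ι} (hs : 𝒜.Shatters s) : #s ≤ finrank 𝕜 E := by
  by_contra! hlt
  have hdep : ¬ LinearIndepOn 𝕜 (fun t => (g t).linear) (s : Set ι) := fun hli => by
    have := LinearIndependent.fintype_card_le_finrank hli
    simp only [Subspace.dual_finrank_eq, coe_sort_coe, Fintype.card_coe] at this
    omega
  obtain ⟨a, ha, t₀, ht₀s, ht₀⟩ := not_linearIndepOn_finset_iff.1 hdep
  obtain ⟨x, hx⟩ := exists_pos_iff_of_shatters h𝒜 hs a
  obtain ⟨y, hy⟩ := exists_pos_iff_of_shatters h𝒜 hs (-a)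
  have hax := sum_mul_apply_eq_of_sum_smul_linear_eq_zero g ha x
  have hay := sum_mul_apply_eq_of_sum_smul_linear_eq_zero g ha y
  have hx₀ : 0 ≤ ∑ t ∈ s, a t * g t x := sum_nonneg fun t ht => mul_nonneg_of_pos_iff (hx t ht)
  have hy₀ : 0 ≤ ∑ t ∈ s, -a t * g t y := sum_nonneg fun t ht => mul_nonneg_of_pos_iff (hy t ht)
  simp only [neg_mul, sum_neg_distrib] at hy₀
  rcases ht₀.lt_or_gt with hneg | hpos
  · have := sum_mul_pos_of_pos_iff hy ⟨t₀, ht₀s, neg_pos.2 hneg⟩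
    simp only [Pi.neg_apply, neg_mul, sum_neg_distrib] at this
    linarith
  · have := sum_mul_pos_of_pos_iff hx ⟨t₀, ht₀s, hpos⟩
    linarith

end AffineSigns

theorem card_le_sum_choose_of_shatters {α : Type*} [DecidableEq α] {𝒜 : Finset (Finset α)}
    {X : Finset α} {d : ℕ} (hX : ∀ A ∈ 𝒜, A ⊆ X) (hd : ∀ s, 𝒜.Shatters s → #s ≤ d) :
    #𝒜 ≤ ∑ k ∈ range (d + 1), (#X).choose k := by
  calc #𝒜 ≤ #𝒜.shatterer := card_le_card_shatterer 𝒜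
    _ ≤ #((range (d + 1)).biUnion (powersetCard · X)) := by
      refine card_le_card fun s hs => ?_
      have hs := mem_shatterer.1 hs
      obtain ⟨u, hu, hsu⟩ := hs.exists_superset
      exact mem_biUnion.2 ⟨#s, mem_range.2 (Nat.lt_succ_of_le (hd s hs)),
        mem_powersetCard.2 ⟨hsu.trans (hX u hu), rfl⟩⟩
    _ ≤ ∑ k ∈ range (d + 1), #(powersetCard k X) := card_biUnion_le
    _ = ∑ k ∈ range (d + 1), (#X).choose k := by simp only [card_powersetCard]

lemma sum_range_choose_le_mul_pow {n : ℕ} (hn : 1 ≤ n) (d : ℕ) :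
    ∑ k ∈ range (d + 1), n.choose k ≤ (d + 1) * n ^ d := by
  calc ∑ k ∈ range (d + 1), n.choose k ≤ ∑ _k ∈ range (d + 1), n ^ d :=
        sum_le_sum fun k hk => (Nat.choose_le_pow n k).trans
          (Nat.pow_le_pow_right hn (Nat.lt_succ_iff.1 (mem_range.1 hk)))
    _ = (d + 1) * n ^ d := by rw [sum_const, card_range, smul_eq_mul]

section SqDist

variable {E : Type*} [NormedAddCommGroup E] [InnerProductSpace ℝ E]

noncomputable def sqDistSub (a b : E) : E →ᵃ[ℝ] ℝ where
  toFun x := ‖x - b‖ ^ 2 - ‖x - a‖ ^ 2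
  linear := innerₛₗ ℝ ((2 : ℝ) • (a - b))
  map_vadd' x v := by
    simp only [vadd_eq_add, innerₛₗ_apply_apply, add_sub_assoc, norm_add_sq_real, inner_sub_right,
      real_inner_smul_right, real_inner_comm v]
    ring

lemma sqDistSub_pos_iff {a b x : E} : 0 < sqDistSub a b x ↔ ‖x - a‖ < ‖x - b‖ := by
  show 0 < ‖x - b‖ ^ 2 - ‖x - a‖ ^ 2 ↔ _
  rw [sub_pos, sq_lt_sq₀ (norm_nonneg _) (norm_nonneg _)]

end SqDist

def distancePatterns {ι E : Type*} [NormedAddCommGroup E] (c : ι → E) : Set (ι → ι → Prop) :=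
  {p | ∃ x, ∀ i j, p i j ↔ ‖x - c i‖ < ‖x - c j‖}

section DistancePatterns

variable {ι E : Type*} [Fintype ι] [NormedAddCommGroup E] [InnerProductSpace ℝ E]

lemma distancePatterns_subset_image (c : ι → E) :
    distancePatterns c ⊆ (fun S i j => (i, j) ∈ S) ''
      Set.range (positivityPattern fun q : ι × ι => sqDistSub (c q.1) (c q.2)) := by
  rintro p ⟨x, hx⟩
  refine ⟨_, ⟨x, rfl⟩, ?_⟩
  ext i j
  simp [positivityPattern, sqDistSub_pos_iff, hx]

theorem distancePatterns_finite (c : ι → E) : (distancePatterns c).Finite :=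
  ((Set.toFinite _).image _).subset (distancePatterns_subset_image c)

theorem ncard_distancePatterns_le [DecidableEq ι] [FiniteDimensional ℝ E] (c : ι → E) :
    (distancePatterns c).ncard ≤
      ∑ k ∈ range (finrank ℝ E + 1), (Fintype.card ι * (Fintype.card ι - 1)).choose k := by
  set g : ι × ι → E →ᵃ[ℝ] ℝ := fun q => sqDistSub (c q.1) (c q.2)
  set R := Set.range (positivityPattern g)
  have hR : R.Finite := Set.toFinite R
  have hoffDiag : ∀ A ∈ hR.toFinset, A ⊆ (univ : Finset ι).offDiag := by
    simp only [Set.Finite.mem_toFinset, R, Set.forall_mem_range]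
    intro x q hq
    simp only [positivityPattern, g, mem_filter, sqDistSub_pos_iff] at hq
    exact mem_offDiag.2 ⟨mem_univ _, mem_univ _, fun h => (h ▸ hq.2).false⟩
  calc (distancePatterns c).ncard ≤ (_ '' R).ncard :=
        Set.ncard_le_ncard (distancePatterns_subset_image c) (hR.image _)
    _ ≤ #hR.toFinset := (Set.ncard_image_le hR).trans_eq (Set.ncard_eq_toFinset_card R hR)
    _ ≤ ∑ k ∈ range (finrank ℝ E + 1), (#(univ : Finset ι).offDiag).choose k :=
        card_le_sum_choose_of_shatters hoffDiag fun _ hs =>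
          card_le_finrank_of_shatters (g := g) hR.coe_toFinset.le hs
    _ = _ := by rw [offDiag_card, card_univ, Nat.mul_sub_one]

end DistancePatterns

theorem comparison_patterns_finite_card_le_explicit_general
    (d m : ℕ) (hm : 2 ≤ m) (c : Fin m → EuclideanSpace ℝ (Fin d)) :
    ({p : Fin m → Fin m → Prop | ∃ x : EuclideanSpace ℝ (Fin d),
        (∀ i j : Fin m, i ≠ j → ‖x - c i‖ ≠ ‖x - c j‖) ∧
        (∀ i j : Fin m, p i j ↔ ‖x - c i‖ < ‖x - c j‖)}).Finite ∧
    ({p : Fin m → Fin m → Prop | ∃ x : EuclideanSpace ℝ (Fin d),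
        (∀ i j : Fin m, i ≠ j → ‖x - c i‖ ≠ ‖x - c j‖) ∧
        (∀ i j : Fin m, p i j ↔ ‖x - c i‖ < ‖x - c j‖)}).ncard
      ≤ (d + 1) * (m * (m - 1)) ^ d := by
  have hfin := distancePatterns_finite c
  refine ⟨hfin.subset ?forget_ties, (Set.ncard_le_ncard ?forget_ties hfin).trans ?_⟩
  case forget_ties => exact fun p ⟨x, _, hx⟩ => ⟨x, hx⟩
  calc (distancePatterns c).ncard ≤ ∑ k ∈ range (d + 1), (m * (m - 1)).choose k := by
        simpa using ncard_distancePatterns_le c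
    _ ≤ (d + 1) * (m * (m - 1)) ^ d :=
        sum_range_choose_le_mul_pow (Nat.mul_pos (by omega) (by omega)) d

/-- Lemma 4.3 (explicit bound): the strict distance-comparison patterns realized by tie-free
points in `ℝ^d` with respect to `m ≥ 2` pairwise-distinct candidate positions number at most
`(d+1) · (m(m-1))^d`. -/
theorem comparison_patterns_finite_card_le_explicit
    (d m : ℕ) (hm : 2 ≤ m) (c : Fin m → EuclideanSpace ℝ (Fin d)) (hc : Function.Injective c) :
    ({p : Fin m → Fin m → Prop | ∃ x : EuclideanSpace ℝ (Fin d),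
        (∀ i j : Fin m, i ≠ j → ‖x - c i‖ ≠ ‖x - c j‖) ∧
        (∀ i j : Fin m, p i j ↔ ‖x - c i‖ < ‖x - c j‖)}).Finite ∧
    ({p : Fin m → Fin m → Prop | ∃ x : EuclideanSpace ℝ (Fin d),
        (∀ i j : Fin m, i ≠ j → ‖x - c i‖ ≠ ‖x - c j‖) ∧
        (∀ i j : Fin m, p i j ↔ ‖x - c i‖ < ‖x - c j‖)}).ncard
      ≤ (d + 1) * (m * (m - 1)) ^ d :=
  comparison_patterns_finite_card_le_explicit_general d m hm c
end

section
/- Let S be the set consisting of the following four strict linear orders on Fin 3 (writing i ≺ j to mean i is ranked before j): 0 ≺ 1 ≺ 2, 1 ≺ 0 ≺ 2, 1 ≺ 2 ≺ 0, and 2 ≺ 1 ≺ 0. Then there is no partial order ⊑ on Fin 3 (a reflexive, antisymmetric, transitive relation) such that the set of strict linear orders L satisfying (for all i ≠ j, i ⊑ j implies L i j) is exactly S. -/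
/-- A strict linear order on `Fin 3`: an irreflexive, transitive relation that is total on
distinct elements. -/
def IsStrictLinearOrder (L : Fin 3 → Fin 3 → Prop) : Prop :=
  Irreflexive L ∧ Transitive L ∧ ∀ i j : Fin 3, i ≠ j → L i j ∨ L j i

/-- Section 3: the set of four strict linear orders `0 ≺ 1 ≺ 2`, `1 ≺ 0 ≺ 2`, `1 ≺ 2 ≺ 0`,
`2 ≺ 1 ≺ 0` is not the set of linear extensions of any partial order on `Fin 3`. -/
theorem no_partial_order_with_these_extensions :
    ¬ ∃ P : Fin 3 → Fin 3 → Prop, Reflexive P ∧ AntiSymmetric P ∧ Transitive P ∧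
      {L : Fin 3 → Fin 3 → Prop | IsStrictLinearOrder L ∧ ∀ i j : Fin 3, i ≠ j → P i j → L i j}
        = ({(fun i j => i < j),
            (fun i j => (i = 1 ∧ j = 0) ∨ (i = 1 ∧ j = 2) ∨ (i = 0 ∧ j = 2)),
            (fun i j => (i = 1 ∧ j = 2) ∨ (i = 1 ∧ j = 0) ∨ (i = 2 ∧ j = 0)),
            (fun i j => j < i)} : Set (Fin 3 → Fin 3 → Prop)) := by
  rintro ⟨P, _, _, _, h⟩
  -- The ascending order is in S, so it extends P
  have h1 : ((fun i j : Fin 3 => i < j) ∈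
      {L : Fin 3 → Fin 3 → Prop | IsStrictLinearOrder L ∧
        ∀ i j : Fin 3, i ≠ j → P i j → L i j}) := by
    rw [h]; left; rfl
  -- The descending order is in S, so it extends P
  have h4 : ((fun i j : Fin 3 => j < i) ∈
      {L : Fin 3 → Fin 3 → Prop | IsStrictLinearOrder L ∧
        ∀ i j : Fin 3, i ≠ j → P i j → L i j}) := by
    rw [h]; right; right; right; rfl
  -- Hence P is trivial on distinct pairs
  have hPtriv : ∀ i j : Fin 3, i ≠ j → ¬ P i j := by
    intro i j hij hP
    have ha : i < j := h1.2 i j hij hP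
    have hb : j < i := h4.2 i j hij hP
    exact absurd ha (not_lt_of_gt hb)
  -- The order 0 ≺ 2 ≺ 1 then also extends P
  set L5 : Fin 3 → Fin 3 → Prop :=
    fun i j => (i = 0 ∧ j = 2) ∨ (i = 2 ∧ j = 1) ∨ (i = 0 ∧ j = 1) with hL5
  have hmem : L5 ∈ {L : Fin 3 → Fin 3 → Prop | IsStrictLinearOrder L ∧
      ∀ i j : Fin 3, i ≠ j → P i j → L i j} := by
    constructor
    · refine ⟨?_, ?_, ?_⟩
      · intro a; revert a; decide
      · intro a b c; revert a b c; decide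
      · decide
    · intro i j hij hP; exact absurd hP (hPtriv i j hij)
  rw [h] at hmem
  -- But L5 is none of the four orders in S
  rcases hmem with h' | h' | h' | h'
  · have := congrFun (congrFun h' 2) 1
    have : L5 2 1 ↔ ((2 : Fin 3) < 1) := by rw [this]
    simp [hL5] at this
  · have := congrFun (congrFun h' 2) 1
    have : L5 2 1 ↔ (((2:Fin 3) = 1 ∧ (1:Fin 3) = 0) ∨ ((2:Fin 3) = 1 ∧ (1:Fin 3) = 2) ∨
        ((2:Fin 3) = 0 ∧ (1:Fin 3) = 2)) := by rw [this]
    simp [hL5] at this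
  · have := congrFun (congrFun h' 2) 1
    have : L5 2 1 ↔ (((2:Fin 3) = 1 ∧ (1:Fin 3) = 2) ∨ ((2:Fin 3) = 1 ∧ (1:Fin 3) = 0) ∨
        ((2:Fin 3) = 2 ∧ (1:Fin 3) = 0)) := by rw [this]
    simp [hL5] at this
  · have := congrFun (congrFun h' 0) 2
    have : L5 0 2 ↔ ((2 : Fin 3) < 0) := by rw [this]
    simp [hL5] at this
end

section
/- Let c : Fin m → ℝ be strictly increasing, let x ∈ ℝ, let t be a natural number, and let i be an index in Fin m with t ≤ i.val and i.val < m − t. Then rank_x(i) < m − t, where rank_x(i) := #{ j : Fin m | |x − c j| < |x − c i|, or (|x − c j| = |x − c i| and j < i) }. -/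
/-- The tie-broken rank of candidate `i` for a voter at position `x`: the number of
candidates strictly closer to `x`, or equidistant with a smaller index. -/
noncomputable def rank {m : ℕ} (c : Fin m → ℝ) (x : ℝ) (i : Fin m) : ℕ :=
  (Finset.univ.filter fun j => |x - c j| < |x - c i| ∨ (|x - c j| = |x - c i| ∧ j < i)).card

/-- A candidate that is neither among the first `t` nor among the last `t` candidates on the
line is never among the `t` candidates farthest from the voter. -/
theorem middle_candidate_rank_lt
    (m : ℕ) (c : Fin m → ℝ) (hc : StrictMono c) (x : ℝ) (t : ℕ)
    (i : Fin m) (hti : t ≤ i.val) (him : i.val < m - t) :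
    rank c x i < m - t := by
  rcases le_or_gt x (c i) with hx | hx
  · -- all j ≥ i are excluded; rank ≤ i.val
    have hsub : (Finset.univ.filter fun j => |x - c j| < |x - c i| ∨
        (|x - c j| = |x - c i| ∧ j < i)) ⊆ Finset.Iio i := by
      intro j hj
      simp only [Finset.mem_filter, Finset.mem_univ, true_and] at hj
      simp only [Finset.mem_Iio]
      by_contra hji
      push_neg at hji
      rcases eq_or_lt_of_le hji with h | h
      · subst h
        rcases hj with h | ⟨_, h⟩
        · exact lt_irrefl _ h
        · exact lt_irrefl _ h
      · have hcj : c i < c j := hc h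
        have h1 : |x - c i| = c i - x := by
          rw [abs_of_nonpos (by linarith)]; ring
        have h2 : |x - c j| = c j - x := by
          rw [abs_of_nonpos (by linarith)]; ring
        have hgt : |x - c i| < |x - c j| := by rw [h1, h2]; linarith
        rcases hj with h' | ⟨h', _⟩
        · linarith
        · linarith
    have hcard : rank c x i ≤ i.val := by
      calc rank c x i ≤ (Finset.Iio i).card := Finset.card_le_card hsub
        _ = i.val := Fin.card_Iio i
    exact lt_of_le_of_lt hcard him
  · -- all j ≤ i are excluded; rank ≤ m - 1 - i
    have hsub : (Finset.univ.filter fun j => |x - c j| < |x - c i| ∨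
        (|x - c j| = |x - c i| ∧ j < i)) ⊆ Finset.Ioi i := by
      intro j hj
      simp only [Finset.mem_filter, Finset.mem_univ, true_and] at hj
      simp only [Finset.mem_Ioi]
      by_contra hji
      push_neg at hji
      rcases eq_or_lt_of_le hji with h | h
      · subst h
        rcases hj with h | ⟨_, h⟩
        · exact lt_irrefl _ h
        · exact lt_irrefl _ h
      · have hcj : c j < c i := hc h
        have h1 : |x - c i| = x - c i := abs_of_pos (by linarith)
        have h2 : |x - c j| = x - c j := abs_of_pos (by linarith)
        have hgt : |x - c i| < |x - c j| := by rw [h1, h2]; linarith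
        rcases hj with h' | ⟨h', _⟩
        · linarith
        · linarith
    have hcard : rank c x i ≤ m - 1 - i.val := by
      calc rank c x i ≤ (Finset.Ioi i).card := Finset.card_le_card hsub
        _ = m - 1 - i.val := Fin.card_Ioi i
    have hm : i.val < m := i.isLt
    omega
end

section
/- Let c : Fin m → ℝ be strictly increasing, let x ∈ ℝ, let k be a natural number, and let i ≤ j ≤ l be indices in Fin m. If rank_x(i) < k and rank_x(l) < k, then rank_x(j) < k, where rank_x(i) := #{ j' : Fin m | |x − c j'| < |x − c i|, or (|x − c j'| = |x − c i| and j' < i) }. -/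
/-- Under `k`-approval (rank `< k`), the set of approved candidates is a set of consecutive
candidates on the line. -/
theorem approved_set_consecutive
    (m : ℕ) (c : Fin m → ℝ) (hc : StrictMono c) (x : ℝ) (k : ℕ)
    (i j l : Fin m) (hij : i ≤ j) (hjl : j ≤ l)
    (hi : rank c x i < k) (hl : rank c x l < k) :
    rank c x j < k := by
  have rank_mono : ∀ a b : Fin m,
      (|x - c a| < |x - c b| ∨ (|x - c a| = |x - c b| ∧ a ≤ b)) →
      rank c x a ≤ rank c x b := by
    intro a b hab
    apply Finset.card_le_card
    intro t ht
    simp only [Finset.mem_filter, Finset.mem_univ, true_and] at ht ⊢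
    rcases hab with h | ⟨he, hle⟩
    · rcases ht with h' | ⟨he', _⟩
      · exact Or.inl (h'.trans h)
      · exact Or.inl (he' ▸ h)
    · rcases ht with h' | ⟨he', hlt'⟩
      · exact Or.inl (he ▸ h')
      · exact Or.inr ⟨he'.trans he, hlt'.trans_le hle⟩
  rcases le_or_gt (c j) x with hcx | hcx
  · -- c j ≤ x : compare with i
    rcases eq_or_lt_of_le hij with rfl | hlt
    · exact hi
    · have hci : c i < c j := hc hlt
      have : |x - c j| < |x - c i| := by
        rw [abs_of_nonneg (by linarith), abs_of_nonneg (by linarith)]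
        linarith
      exact lt_of_le_of_lt (rank_mono j i (Or.inl this)) hi
  · -- x < c j : compare with l
    rcases eq_or_lt_of_le hjl with rfl | hlt
    · exact hl
    · have hcl : c j < c l := hc hlt
      have : |x - c j| < |x - c l| := by
        rw [abs_of_nonpos (by linarith), abs_of_nonpos (by linarith)]
        linarith
      exact lt_of_le_of_lt (rank_mono j l (Or.inl this)) hl
end

section
/- Fix k ≥ 1 and m ≥ k, and let there be n partial votes (ℓ_j, u_j), j : Fin n, each with ℓ_j ≤ u_j ≤ m − 1 and u_j − ℓ_j + 1 ≥ k. Let c be a candidate with c ≤ m − 1. Define a new profile by: if ℓ_j ≤ c ≤ u_j then ℓ'_j = max(ℓ_j, c + 1 − k) and u'_j = min(u_j, c + k − 1) (subtraction truncated at 0), and otherwise (ℓ'_j, u'_j) = (ℓ_j, u_j). Then: (i) each (ℓ'_j, u'_j) is a valid partial vote, i.e. ℓ'_j ≤ u'_j ≤ m − 1 and u'_j − ℓ'_j + 1 ≥ k; (ii) in the new profile, every voter either approves c under every completion or approves c under no completion; and (iii) c is a possible winner of the new profile if and only if c is a possible winner of the original profile. -/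
/-- `s` is a completion (start value) of the partial vote `(ℓ, u)` under `k`-approval. -/
def Completes (k ℓ u s : ℕ) : Prop := ℓ ≤ s ∧ s + k - 1 ≤ u

/-- Under the completion starting at `s`, the voter approves candidate `c`. -/
def Approves (k s c : ℕ) : Prop := s ≤ c ∧ c ≤ s + k - 1

/-- The `k`-approval score of candidate `i` under the completion `s`. -/
def score (k : ℕ) {n : ℕ} (s : Fin n → ℕ) (i : ℕ) : ℕ :=
  (Finset.univ.filter fun j => s j ≤ i ∧ i ≤ s j + k - 1).card

/-- Candidate `c` is a possible winner of the partial profile `(ℓ, u)` under `k`-approval. -/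
def PossibleWinner (k m : ℕ) {n : ℕ} (ℓ u : Fin n → ℕ) (c : ℕ) : Prop :=
  ∃ s : Fin n → ℕ, (∀ j, Completes k (ℓ j) (u j) (s j)) ∧
    ∀ i : ℕ, i ≤ m - 1 → score k s i ≤ score k s c

/-- Lemma 5.1: shrinking each interval that can contain `c` so that every completion approves
`c` yields a valid partial profile in which each voter necessarily or never approves `c`,
preserving whether `c` is a possible winner. -/
theorem necessary_approval_conversion
    (k m n : ℕ) (hk : 1 ≤ k) (hm : k ≤ m)
    (ℓ u : Fin n → ℕ)
    (hval : ∀ j, ℓ j ≤ u j ∧ u j ≤ m - 1 ∧ k ≤ u j - ℓ j + 1)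
    (c : ℕ) (hc : c ≤ m - 1)
    (ℓ' u' : Fin n → ℕ)
    (hℓ' : ∀ j, ℓ' j = if ℓ j ≤ c ∧ c ≤ u j then max (ℓ j) (c + 1 - k) else ℓ j)
    (hu' : ∀ j, u' j = if ℓ j ≤ c ∧ c ≤ u j then min (u j) (c + k - 1) else u j) :
    (∀ j, ℓ' j ≤ u' j ∧ u' j ≤ m - 1 ∧ k ≤ u' j - ℓ' j + 1) ∧
    (∀ j, (∀ s, Completes k (ℓ' j) (u' j) s → Approves k s c) ∨
          (∀ s, Completes k (ℓ' j) (u' j) s → ¬ Approves k s c)) ∧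
    (PossibleWinner k m ℓ' u' c ↔ PossibleWinner k m ℓ u c) := by
  classical
  have hval' : ∀ j, ℓ' j ≤ u' j ∧ u' j ≤ m - 1 ∧ k ≤ u' j - ℓ' j + 1 := by
    intro j
    obtain ⟨h1, h2, h3⟩ := hval j
    rw [hℓ' j, hu' j]
    by_cases h : ℓ j ≤ c ∧ c ≤ u j
    · rw [if_pos h, if_pos h]; omega
    · rw [if_neg h, if_neg h]; omega
  refine ⟨hval', ?_, ?_, ?_⟩
  · intro j
    obtain ⟨h1, h2, h3⟩ := hval j
    by_cases h : ℓ j ≤ c ∧ c ≤ u j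
    · left
      rintro s ⟨hs1, hs2⟩
      rw [hℓ' j, if_pos h] at hs1
      rw [hu' j, if_pos h] at hs2
      exact ⟨by omega, by omega⟩
    · right
      rintro s ⟨hs1, hs2⟩ ⟨ha1, ha2⟩
      rw [hℓ' j, if_neg h] at hs1
      rw [hu' j, if_neg h] at hs2
      omega
  · rintro ⟨s, hs, hw⟩
    refine ⟨s, fun j => ?_, hw⟩
    obtain ⟨hs1, hs2⟩ := hs j
    rw [hℓ' j] at hs1; rw [hu' j] at hs2
    obtain ⟨h1, h2, h3⟩ := hval j
    by_cases h : ℓ j ≤ c ∧ c ≤ u j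
    · rw [if_pos h] at hs1 hs2; exact ⟨by omega, by omega⟩
    · rw [if_neg h] at hs1 hs2; exact ⟨hs1, hs2⟩
  · rintro ⟨s, hs, hw⟩
    obtain ⟨s', hds⟩ : ∃ s' : Fin n → ℕ, ∀ j, s' j =
        if ℓ j ≤ c ∧ c ≤ u j ∧ ¬(s j ≤ c ∧ c ≤ s j + k - 1) then max (ℓ j) (c + 1 - k)
        else s j := ⟨_, fun j => rfl⟩
    have hfact : ∀ j, (Completes k (ℓ' j) (u' j) (s' j)) ∧
        (s' j ≠ s j → ¬(s j ≤ c ∧ c ≤ s j + k - 1) ∧ (s' j ≤ c ∧ c ≤ s' j + k - 1)) := by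
      intro j
      obtain ⟨h1, h2, h3⟩ := hval j
      obtain ⟨g1, g2, g3⟩ := hval' j
      have hl := hℓ' j
      have hu := hu' j
      obtain ⟨c1, c2⟩ := hs j
      by_cases h : ℓ j ≤ c ∧ c ≤ u j
      · rw [if_pos h] at hl hu
        by_cases h4 : s j ≤ c ∧ c ≤ s j + k - 1
        · have heq : s' j = s j := by
            rw [hds j, if_neg (by tauto)]
          refine ⟨⟨?_, ?_⟩, fun hne => absurd heq hne⟩ <;> rw [heq] <;> omega
        · have heq : s' j = max (ℓ j) (c + 1 - k) := by
            rw [hds j, if_pos ⟨h.1, h.2, h4⟩]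
          refine ⟨⟨?_, ?_⟩, fun _ => ⟨h4, ?_, ?_⟩⟩ <;> rw [heq] <;> omega
      · have heq : s' j = s j := by
          rw [hds j, if_neg (by tauto)]
        rw [if_neg h] at hl hu
        exact ⟨⟨by omega, by omega⟩, fun hne => absurd heq hne⟩
    refine ⟨s', fun j => (hfact j).1, ?_⟩
    intro i hi
    set Ch : Finset (Fin n) := Finset.univ.filter fun j => s' j ≠ s j with hCh
    have key1 : score k s' i ≤ score k s i + Ch.card := by
      unfold score
      calc (Finset.univ.filter fun j => s' j ≤ i ∧ i ≤ s' j + k - 1).card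
          ≤ ((Finset.univ.filter fun j => s j ≤ i ∧ i ≤ s j + k - 1) ∪ Ch).card := by
            apply Finset.card_le_card
            intro j hj
            simp only [hCh, Finset.mem_filter, Finset.mem_union, Finset.mem_univ,
              true_and] at hj ⊢
            by_cases hne : s' j = s j
            · left; rw [hne] at hj; exact hj
            · right; exact hne
        _ ≤ _ := Finset.card_union_le _ _
    have key2 : score k s c + Ch.card ≤ score k s' c := by
      unfold score
      have hdisj : Disjoint (Finset.univ.filter fun j => s j ≤ c ∧ c ≤ s j + k - 1) Ch := by
        rw [Finset.disjoint_left]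
        intro j hj hj'
        simp only [hCh, Finset.mem_filter, Finset.mem_univ, true_and] at hj hj'
        exact ((hfact j).2 hj').1 hj
      rw [← Finset.card_union_of_disjoint hdisj]
      apply Finset.card_le_card
      intro j hj
      simp only [hCh, Finset.mem_filter, Finset.mem_union, Finset.mem_univ, true_and] at hj ⊢
      rcases hj with hj | hj
      · by_cases hne : s' j = s j
        · rw [hne]; exact hj
        · exact ((hfact j).2 hne).2
      · exact ((hfact j).2 hj).2
    have := hw i hi
    omega
end

section
/- Fix k ≥ 1 and m ≥ k, and let there be n partial votes (ℓ_j, u_j), j : Fin n, each with ℓ_j ≤ u_j ≤ m − 1 and u_j − ℓ_j + 1 ≥ k. Let c ≤ m − 1 be a candidate, and suppose every voter either approves c under every completion of its partial vote or approves c under no completion; let M be the number of voters of the first kind. Then c is a possible winner if and only if there exist start values s : Fin n → ℕ with ℓ_j ≤ s_j and s_j + k − 1 ≤ u_j for all j, together with an assignment h : Fin n → Fin M, such that for all j ≠ j' with h j = h j', the windows {s_j, …, s_j + k − 1} and {s_{j'}, …, s_{j'} + k − 1} are disjoint. -/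
/-- Greedy interval coloring: color `i` with the least color not used by an earlier
overlapping interval. -/
noncomputable def greedy (W : ℕ → Finset ℕ) : ℕ → ℕ
  | i => sInf {c | ∀ i' (_ : i' < i), ¬ Disjoint (W i') (W i) → greedy W i' ≠ c}
termination_by i => i

lemma greedy_mem (W : ℕ → Finset ℕ) (i : ℕ) :
    greedy W i ∈ {c | ∀ i' (_ : i' < i), ¬ Disjoint (W i') (W i) → greedy W i' ≠ c} := by
  rw [greedy]
  apply Nat.sInf_mem
  refine ⟨((Finset.range i).image (greedy W)).sup id + 1, fun i' hi' _ h => ?_⟩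
  have : greedy W i' ≤ ((Finset.range i).image (greedy W)).sup id :=
    Finset.le_sup (f := id) (Finset.mem_image_of_mem _ (Finset.mem_range.2 hi'))
  omega

lemma greedy_spec (W : ℕ → Finset ℕ) {i' i : ℕ} (h : i' < i)
    (hov : ¬ Disjoint (W i') (W i)) : greedy W i' ≠ greedy W i :=
  greedy_mem W i i' h hov

lemma greedy_le (W : ℕ → Finset ℕ) (i : ℕ) :
    greedy W i ≤ ((Finset.range i).filter (fun i' => ¬ Disjoint (W i') (W i))).card := by
  set T := (Finset.range i).filter (fun i' => ¬ Disjoint (W i') (W i)) with hT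
  have hsub : ¬ (Finset.range (T.card + 1) ⊆ T.image (greedy W)) := by
    intro hsub
    have h1 := Finset.card_le_card hsub
    have h2 := Finset.card_image_le (s := T) (f := greedy W)
    simp only [Finset.card_range] at h1
    omega
  obtain ⟨c, hc1, hc2⟩ := Finset.not_subset.1 hsub
  have hcmem : c ∈ {c | ∀ i' (_ : i' < i), ¬ Disjoint (W i') (W i) → greedy W i' ≠ c} := by
    intro i' hi' hov heq
    exact hc2 (heq ▸ Finset.mem_image_of_mem _
      (Finset.mem_filter.2 ⟨Finset.mem_range.2 hi', hov⟩))
  have h3 : greedy W i ≤ c := by rw [greedy]; exact Nat.sInf_le hcmem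
  have h4 := Finset.mem_range.1 hc1
  omega

/-- Interval coloring lemma: intervals of common length `k` whose pointwise load is at
most `M` can be `M`-colored with same-colored intervals disjoint. -/
lemma coloring (n k M : ℕ) (hk : 1 ≤ k) (s : Fin n → ℕ)
    (H : ∀ j : Fin n,
      (Finset.univ.filter fun j' : Fin n => s j' ≤ s j ∧ s j ≤ s j' + k - 1).card ≤ M) :
    ∃ h : Fin n → Fin M, ∀ j j' : Fin n, j ≠ j' → h j = h j' →
      Disjoint (Finset.Icc (s j) (s j + k - 1)) (Finset.Icc (s j') (s j' + k - 1)) := by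
  classical
  set σ := Tuple.sort s with hσ
  have mono : Monotone (s ∘ σ) := Tuple.monotone_sort s
  set W : ℕ → Finset ℕ := fun i =>
    if h : i < n then Finset.Icc (s (σ ⟨i, h⟩)) (s (σ ⟨i, h⟩) + k - 1) else ∅ with hW
  have hWj : ∀ j : Fin n, W ((σ.symm j : Fin n) : ℕ) = Finset.Icc (s j) (s j + k - 1) := by
    intro j
    have h1 : ((σ.symm j : Fin n) : ℕ) < n := (σ.symm j).isLt
    simp only [hW, dif_pos h1]
    congr 2 <;>
    · have : (⟨((σ.symm j : Fin n) : ℕ), h1⟩ : Fin n) = σ.symm j := Fin.eta _ _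
      rw [this, Equiv.apply_symm_apply]
  -- bound on greedy colors
  have hbound : ∀ i (hi : i < n), greedy W i < M := by
    intro i hi
    have hn : 0 < n := lt_of_le_of_lt (Nat.zero_le i) hi
    set p := s (σ ⟨i, hi⟩) with hp
    set A := (Finset.univ.filter fun j' : Fin n => s j' ≤ p ∧ p ≤ s j' + k - 1) with hA
    have hAi : σ ⟨i, hi⟩ ∈ A := by
      simp only [hA, Finset.mem_filter, Finset.mem_univ, true_and]
      omega
    have hM1 : 1 ≤ M := le_trans (Finset.card_pos.2 ⟨_, hAi⟩) (H (σ ⟨i, hi⟩))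
    have hle := greedy_le W i
    set T := (Finset.range i).filter (fun i' => ¬ Disjoint (W i') (W i)) with hTdef
    set φ : ℕ → Fin n := fun i' => σ ⟨i' % n, Nat.mod_lt i' hn⟩ with hφ
    have hmaps : ∀ i' ∈ T, φ i' ∈ A.erase (σ ⟨i, hi⟩) := by
      intro i' hi'
      have h1 := Finset.mem_filter.1 hi'
      have hi'lt : i' < i := Finset.mem_range.1 h1.1
      have hi'n : i' < n := lt_trans hi'lt hi
      have hmod : i' % n = i' := Nat.mod_eq_of_lt hi'n
      obtain ⟨x, hx1, hx2⟩ := Finset.not_disjoint_iff.1 h1.2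
      rw [hW] at hx1 hx2
      simp only [dif_pos hi'n, dif_pos hi, Finset.mem_Icc] at hx1 hx2
      have hmono : s (σ ⟨i', hi'n⟩) ≤ s (σ ⟨i, hi⟩) :=
        mono (show (⟨i', hi'n⟩ : Fin n) ≤ ⟨i, hi⟩ from le_of_lt hi'lt)
      have heqφ : φ i' = σ ⟨i', hi'n⟩ := by
        simp only [hφ]; congr 1; exact Fin.ext hmod
      rw [heqφ]
      refine Finset.mem_erase.2 ⟨?_, ?_⟩
      · intro heq
        have := σ.injective heq
        have : i' = i := congrArg Fin.val this
        omega
      · simp only [hA, Finset.mem_filter, Finset.mem_univ, true_and]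
        omega
    have hinj : Set.InjOn φ T := by
      intro a ha b hb hab
      have h1 := Finset.mem_filter.1 ha
      have h2 := Finset.mem_filter.1 hb
      have ha' : a < n := lt_trans (Finset.mem_range.1 h1.1) hi
      have hb' : b < n := lt_trans (Finset.mem_range.1 h2.1) hi
      have := σ.injective hab
      have := congrArg Fin.val this
      simpa [Nat.mod_eq_of_lt ha', Nat.mod_eq_of_lt hb'] using this
    have hcard : T.card ≤ (A.erase (σ ⟨i, hi⟩)).card :=
      Finset.card_le_card_of_injOn φ hmaps hinj
    have hcard2 : (A.erase (σ ⟨i, hi⟩)).card = A.card - 1 :=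
      Finset.card_erase_of_mem hAi
    have hAM : A.card ≤ M := H (σ ⟨i, hi⟩)
    have hA1 : 1 ≤ A.card := Finset.card_pos.2 ⟨_, hAi⟩
    omega
  refine ⟨fun j => ⟨greedy W ((σ.symm j : Fin n) : ℕ),
    hbound _ (σ.symm j).isLt⟩, ?_⟩
  intro j j' hne heq
  have heq' : greedy W ((σ.symm j : Fin n) : ℕ) = greedy W ((σ.symm j' : Fin n) : ℕ) :=
    congrArg Fin.val heq
  have hne' : ((σ.symm j : Fin n) : ℕ) ≠ ((σ.symm j' : Fin n) : ℕ) := by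
    intro h
    exact hne (by
      have : σ.symm j = σ.symm j' := Fin.ext h
      simpa using congrArg σ this)
  rcases lt_or_gt_of_ne hne' with h | h
  · by_contra hov
    rw [← hWj j, ← hWj j'] at hov
    exact greedy_spec W h hov heq'
  · by_contra hov
    rw [← hWj j, ← hWj j'] at hov
    exact greedy_spec W h (fun hd => hov hd.symm) heq'.symm

open Classical in
/-- Lemma 5.3: if every voter either necessarily or never approves `c`, and `M` voters
necessarily approve `c`, then `c` is a possible winner iff the corresponding jobs (windows of
length `k` within the intervals) can be scheduled on `M` machines without overlap. -/
theorem possible_winner_iff_schedulable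
    (k m n : ℕ) (hk : 1 ≤ k) (hm : k ≤ m)
    (ℓ u : Fin n → ℕ)
    (hval : ∀ j, ℓ j ≤ u j ∧ u j ≤ m - 1 ∧ k ≤ u j - ℓ j + 1)
    (c : ℕ) (hc : c ≤ m - 1)
    (hsep : ∀ j, (∀ s, Completes k (ℓ j) (u j) s → Approves k s c) ∨
                 (∀ s, Completes k (ℓ j) (u j) s → ¬ Approves k s c))
    (M : ℕ)
    (hM : M = (Finset.univ.filter fun j : Fin n =>
                ∀ s, Completes k (ℓ j) (u j) s → Approves k s c).card) :
    PossibleWinner k m ℓ u c ↔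
      ∃ s : Fin n → ℕ, (∀ j, Completes k (ℓ j) (u j) (s j)) ∧
        ∃ h : Fin n → Fin M, ∀ j j' : Fin n, j ≠ j' → h j = h j' →
          Disjoint (Finset.Icc (s j) (s j + k - 1)) (Finset.Icc (s j') (s j' + k - 1)) := by
  -- For any valid completion, the score of `c` is exactly `M`.
  have score_c : ∀ s : Fin n → ℕ, (∀ j, Completes k (ℓ j) (u j) (s j)) →
      score k s c = M := by
    intro s hs
    rw [hM]
    apply congrArg Finset.card
    ext j
    simp only [Finset.mem_filter, Finset.mem_univ, true_and]
    rcases hsep j with h | h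
    · constructor
      · intro _; exact h
      · intro _; exact h (s j) (hs j)
    · constructor
      · intro hj
        exact absurd ⟨hj.1, hj.2⟩ (h (s j) (hs j))
      · intro hj
        exact absurd (hj (s j) (hs j)) (h (s j) (hs j))
  constructor
  · rintro ⟨s, hs, hwin⟩
    refine ⟨s, hs, ?_⟩
    apply coloring n k M hk s
    intro j
    have hval' := hval j
    have hcs := hs j
    have hsj : s j ≤ m - 1 := by
      have h1 : s j ≤ s j + k - 1 := by omega
      have h2 : s j + k - 1 ≤ u j := hcs.2
      omega
    have := hwin (s j) hsj
    rw [score_c s hs] at this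
    exact le_trans (le_of_eq rfl) this
  · rintro ⟨s, hs, h, hdisj⟩
    refine ⟨s, hs, ?_⟩
    intro i _
    rw [score_c s hs]
    calc score k s i
        ≤ (Finset.univ : Finset (Fin M)).card := by
          apply Finset.card_le_card_of_injOn h (fun j _ => Finset.mem_univ (h j))
          intro j1 h1 j2 h2 heq
          by_contra hne
          have hd := hdisj j1 j2 hne heq
          simp only [Finset.mem_coe, Finset.mem_filter, Finset.mem_univ, true_and] at h1 h2
          exact Finset.disjoint_left.1 hd (Finset.mem_Icc.2 ⟨h1.1, h1.2⟩)
            (Finset.mem_Icc.2 ⟨h2.1, h2.2⟩)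
      _ = M := by simp
end

section
/- Let m, k, n be natural numbers with 2k < m, let c : Fin m → ℝ be strictly increasing, let α be a natural number and β : Fin k → ℕ an antitone function with α > β 0, and define the score vector s : Fin m → ℕ by s(p) = α if p.val < m − k and s(p) = β(p.val − (m − k)) otherwise. Then for every profile x : Fin n → ℝ and every candidate i with k ≤ i.val < m − k: the total score ∑_{j} s(rank_{x_j}(i)) equals n·α, and for every candidate i' one has ∑_{j} s(rank_{x_j}(i')) ≤ n·α; in particular, i is a winner of every spatial profile. -/
/-- The tie-broken rank of candidate `i` for a voter at position `x` (the closest candidate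
has rank 0), bundled as an element of `Fin m`. -/
noncomputable def rankFin {m : ℕ} (c : Fin m → ℝ) (x : ℝ) (i : Fin m) : Fin m :=
  ⟨(Finset.univ.filter fun j => |x - c j| < |x - c i| ∨ (|x - c j| = |x - c i| ∧ j < i)).card, by
    have hi : i ∉ (Finset.univ.filter fun j =>
        |x - c j| < |x - c i| ∨ (|x - c j| = |x - c i| ∧ j < i)) := by simp
    have hss : (Finset.univ.filter fun j =>
        |x - c j| < |x - c i| ∨ (|x - c j| = |x - c i| ∧ j < i)) ⊂ Finset.univ :=
      ⟨Finset.subset_univ _, fun hsub => hi (hsub (Finset.mem_univ i))⟩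
    simpa using Finset.card_lt_card hss⟩

/-- The weighted veto score vector `(α, …, α, β 0, …, β (k-1))` on `m` positions. -/
def wvScore (m k : ℕ) (α : ℕ) (β : Fin k → ℕ) : Fin m → ℕ :=
  fun p => if h : p.val < m - k then α else β ⟨p.val - (m - k), by have := p.isLt; omega⟩

lemma wvScore_le {m k : ℕ} (hk : 0 < k) (α : ℕ) (β : Fin k → ℕ) (hβ : Antitone β)
    (hαβ : β ⟨0, hk⟩ < α) (p : Fin m) : wvScore m k α β p ≤ α := by
  unfold wvScore
  split
  · exact le_rfl
  · exact le_of_lt (lt_of_le_of_lt (hβ (by exact Fin.mk_le_mk.2 (Nat.zero_le _))) hαβ)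

lemma rank_lt {m k : ℕ} (hk : 0 < k) (hkm : 2 * k < m) (c : Fin m → ℝ) (hc : StrictMono c)
    (x : ℝ) (i : Fin m) (hi1 : k ≤ i.val) (hi2 : i.val < m - k) :
    (rankFin c x i).val < m - k := by
  show (Finset.univ.filter fun j => |x - c j| < |x - c i| ∨ (|x - c j| = |x - c i| ∧ j < i)).card
      < m - k
  rcases le_or_gt x (c i) with hx | hx
  · have hsub : (Finset.univ.filter fun j =>
        |x - c j| < |x - c i| ∨ (|x - c j| = |x - c i| ∧ j < i)) ⊆ Finset.Iio i := by
      intro j hj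
      simp only [Finset.mem_filter, Finset.mem_univ, true_and] at hj
      simp only [Finset.mem_Iio]
      rcases lt_trichotomy j i with h | h | h
      · exact h
      · subst h; rcases hj with h | ⟨_, h⟩ <;> exact absurd h (by simp)
      · exfalso
        have hcj : c i < c j := hc h
        have : |x - c i| < |x - c j| := by
          rw [abs_of_nonpos (by linarith), abs_of_nonpos (by linarith)]; linarith
        rcases hj with h' | ⟨h', _⟩ <;> linarith
    calc _ ≤ (Finset.Iio i).card := Finset.card_le_card hsub
      _ = i.val := Fin.card_Iio i
      _ < m - k := hi2
  · have hsub : (Finset.univ.filter fun j =>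
        |x - c j| < |x - c i| ∨ (|x - c j| = |x - c i| ∧ j < i)) ⊆ Finset.Ioi i := by
      intro j hj
      simp only [Finset.mem_filter, Finset.mem_univ, true_and] at hj
      simp only [Finset.mem_Ioi]
      rcases lt_trichotomy j i with h | h | h
      · exfalso
        have hcj : c j < c i := hc h
        have : |x - c i| < |x - c j| := by
          rw [abs_of_nonneg (by linarith), abs_of_nonneg (by linarith)]; linarith
        rcases hj with h' | ⟨h', _⟩ <;> linarith
      · subst h; rcases hj with h | ⟨_, h⟩ <;> exact absurd h (by simp)
      · exact h
    calc _ ≤ (Finset.Ioi i).card := Finset.card_le_card hsub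
      _ = m - 1 - i.val := Fin.card_Ioi i
      _ < m - k := by omega

/-- First part of the proof of Theorem 5.5: under a weighted veto rule, every middle
candidate (neither among the leftmost `k` nor the rightmost `k`) receives the top score `α`
from every voter, and no candidate can exceed `n·α`; in particular every middle candidate is
a winner of every spatial profile. -/
theorem weighted_veto_middle_candidate_always_wins
    (m k n : ℕ) (hk : 0 < k) (hkm : 2 * k < m)
    (c : Fin m → ℝ) (hc : StrictMono c)
    (α : ℕ) (β : Fin k → ℕ) (hβ : Antitone β) (hαβ : β ⟨0, hk⟩ < α)
    (x : Fin n → ℝ) (i : Fin m) (hi1 : k ≤ i.val) (hi2 : i.val < m - k) :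
    (∑ j : Fin n, wvScore m k α β (rankFin c (x j) i) = n * α) ∧
    (∀ i' : Fin m, ∑ j : Fin n, wvScore m k α β (rankFin c (x j) i') ≤ n * α) ∧
    (∀ i' : Fin m, ∑ j : Fin n, wvScore m k α β (rankFin c (x j) i')
        ≤ ∑ j : Fin n, wvScore m k α β (rankFin c (x j) i)) := by
  have hmain : ∑ j : Fin n, wvScore m k α β (rankFin c (x j) i) = n * α := by
    rw [Finset.sum_congr rfl (fun j _ => ?_), Finset.sum_const, Finset.card_univ,
      Fintype.card_fin, smul_eq_mul]
    show wvScore m k α β (rankFin c (x j) i) = α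
    have := rank_lt hk hkm c hc (x j) i hi1 hi2
    unfold wvScore
    rw [dif_pos this]
  have hle : ∀ i' : Fin m, ∑ j : Fin n, wvScore m k α β (rankFin c (x j) i') ≤ n * α := by
    intro i'
    calc ∑ j : Fin n, wvScore m k α β (rankFin c (x j) i')
        ≤ ∑ _j : Fin n, α := Finset.sum_le_sum fun j _ => wvScore_le hk α β hβ hαβ _
      _ = n * α := by simp [Finset.sum_const, mul_comm]
  exact ⟨hmain, hle, fun i' => hmain ▸ hle i'⟩
end

section
/- Let m, k, t, n be natural numbers with k > t ≥ 1 and k + t ≤ m, and let c : Fin m → ℝ be strictly increasing. Define the F(k,t)-score of a rank ρ as 2 if ρ < k, as 1 if k ≤ ρ < m − t, and as 0 if ρ ≥ m − t; define the k-approval score of a rank ρ as 1 if ρ < k and 0 otherwise. Then for every profile x : Fin n → ℝ and every candidate i with t ≤ i.val < m − t, the following are equivalent: (1) the total F(k,t)-score of i, ∑_{j} F(rank_{x_j}(i)), is at least the total F(k,t)-score of every candidate; (2) the total k-approval score of i, ∑_{j} A(rank_{x_j}(i)), is at least the total k-approval score of every candidate. -/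
/-- If the voter is (weakly) left of candidate `j`, then `j` beats all candidates to its
right, so its rank is at most `j.val`. -/
lemma rank_le_left {m : ℕ} (c : Fin m → ℝ) (hc : StrictMono c) (x : ℝ)
    (j : Fin m) (h : x ≤ c j) : rank c x j ≤ j.val := by
  have : (Finset.univ.filter fun j' => |x - c j'| < |x - c j| ∨
      (|x - c j'| = |x - c j| ∧ j' < j)) ⊆ Finset.Iio j := by
    intro j' hj'
    simp only [Finset.mem_filter, Finset.mem_univ, true_and] at hj'
    simp only [Finset.mem_Iio]
    by_contra hle
    push_neg at hle
    rcases eq_or_lt_of_le hle with heq | hlt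
    · subst heq
      rcases hj' with h1 | ⟨_, h2⟩
      · exact lt_irrefl _ h1
      · exact lt_irrefl _ h2
    · have hcc : c j < c j' := hc hlt
      have h1 : |x - c j'| = c j' - x := by
        rw [abs_sub_comm]; exact abs_of_pos (by linarith)
      have h2 : |x - c j| = c j - x := by
        rw [abs_sub_comm]; exact abs_of_nonneg (by linarith)
      rcases hj' with h3 | ⟨h3, _⟩ <;> rw [h1, h2] at h3 <;> linarith
  calc rank c x j ≤ (Finset.Iio j).card := Finset.card_le_card this
    _ = j.val := Fin.card_Iio j

/-- If the voter is (weakly) right of candidate `j`, then `j` beats all candidates to its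
left, so its rank is at most `m - 1 - j.val`. -/
lemma rank_le_right {m : ℕ} (c : Fin m → ℝ) (hc : StrictMono c) (x : ℝ)
    (j : Fin m) (h : c j ≤ x) : rank c x j ≤ m - 1 - j.val := by
  have : (Finset.univ.filter fun j' => |x - c j'| < |x - c j| ∨
      (|x - c j'| = |x - c j| ∧ j' < j)) ⊆ Finset.Ioi j := by
    intro j' hj'
    simp only [Finset.mem_filter, Finset.mem_univ, true_and] at hj'
    simp only [Finset.mem_Ioi]
    by_contra hle
    push_neg at hle
    rcases eq_or_lt_of_le hle with heq | hlt
    · subst heq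
      rcases hj' with h1 | ⟨_, h2⟩
      · exact lt_irrefl _ h1
      · exact lt_irrefl _ h2
    · have hcc : c j' < c j := hc hlt
      have h1 : |x - c j'| = x - c j' := abs_of_pos (by linarith)
      have h2 : |x - c j| = x - c j := abs_of_nonneg (by linarith)
      rcases hj' with h3 | ⟨h3, _⟩ <;> rw [h1, h2] at h3 <;> linarith
  calc rank c x j ≤ (Finset.Ioi j).card := Finset.card_le_card this
    _ = m - 1 - j.val := Fin.card_Ioi j

/-- If the voter is strictly right of candidate `jt` and `j < jt`, every candidate beating
`jt` also beats `j`, so `rank jt ≤ rank j`. -/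
lemma rank_le_of_right {m : ℕ} (c : Fin m → ℝ) (hc : StrictMono c) (x : ℝ)
    {j jt : Fin m} (hjj : j < jt) (hx : c jt < x) :
    rank c x jt ≤ rank c x j := by
  apply Finset.card_le_card
  intro j' hj'
  simp only [Finset.mem_filter, Finset.mem_univ, true_and] at hj' ⊢
  have hcj : c j < c jt := hc hjj
  have habs_t : |x - c jt| = x - c jt := abs_of_pos (by linarith)
  have habs_j : |x - c j| = x - c j := abs_of_pos (by linarith)
  have hlt : jt < j' := by
    by_contra hle
    push_neg at hle
    rcases eq_or_lt_of_le hle with heq | hlt'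
    · subst heq
      rcases hj' with h1 | ⟨_, h2⟩
      · exact lt_irrefl _ h1
      · exact lt_irrefl _ h2
    · have hcc : c j' < c jt := hc hlt'
      have h1 : |x - c j'| = x - c j' := abs_of_pos (by linarith)
      rcases hj' with h3 | ⟨h3, _⟩ <;> rw [h1, habs_t] at h3 <;> linarith
  have hstrict : |x - c j'| < |x - c jt| := by
    rcases hj' with h1 | ⟨_, h2⟩
    · exact h1
    · exact absurd h2 (not_lt.mpr hlt.le)
  left
  rw [habs_t] at hstrict
  rw [habs_j]
  linarith

/-- If the voter is strictly left of candidate `jb` and `jb < j`, every candidate beating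
`jb` also beats `j`, so `rank jb ≤ rank j`. -/
lemma rank_le_of_left {m : ℕ} (c : Fin m → ℝ) (hc : StrictMono c) (x : ℝ)
    {j jb : Fin m} (hjj : jb < j) (hx : x < c jb) :
    rank c x jb ≤ rank c x j := by
  apply Finset.card_le_card
  intro j' hj'
  simp only [Finset.mem_filter, Finset.mem_univ, true_and] at hj' ⊢
  have hcj : c jb < c j := hc hjj
  have habs_b : |x - c jb| = c jb - x := by
    rw [abs_sub_comm]; exact abs_of_pos (by linarith)
  have habs_j : |x - c j| = c j - x := by
    rw [abs_sub_comm]; exact abs_of_pos (by linarith)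
  have hlt : j' < jb := by
    by_contra hle
    push_neg at hle
    rcases eq_or_lt_of_le hle with heq | hlt'
    · subst heq
      rcases hj' with h1 | ⟨_, h2⟩
      · exact lt_irrefl _ h1
      · exact lt_irrefl _ h2
    · have hcc : c jb < c j' := hc hlt'
      have h1 : |x - c j'| = c j' - x := by
        rw [abs_sub_comm]; exact abs_of_pos (by linarith)
      rcases hj' with h3 | ⟨h3, _⟩ <;> rw [h1, habs_b] at h3 <;> linarith
  have hle' : |x - c j'| ≤ |x - c jb| := by
    rcases hj' with h1 | ⟨h2, _⟩
    · exact h1.le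
    · exact h2.le
  left
  rw [habs_b] at hle'
  rw [habs_j]
  linarith

/-- Key equivalence in the proof of Theorem 5.6: for a middle candidate (neither among the
leftmost `t` nor the rightmost `t` candidates on the line), being a winner w.r.t. the
three-valued rule `F(k,t)` coincides with being a winner w.r.t. `k`-approval, in every
spatial profile. -/
theorem Fkt_winner_iff_kApproval_winner
    (m k t n : ℕ) (ht : 1 ≤ t) (htk : t < k) (hktm : k + t ≤ m)
    (c : Fin m → ℝ) (hc : StrictMono c)
    (F A : ℕ → ℕ)
    (hF : ∀ ρ, F ρ = if ρ < k then 2 else if ρ < m - t then 1 else 0)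
    (hA : ∀ ρ, A ρ = if ρ < k then 1 else 0)
    (x : Fin n → ℝ) (i : Fin m) (hi1 : t ≤ i.val) (hi2 : i.val < m - t) :
    (∀ i' : Fin m, ∑ j : Fin n, F (rank c (x j) i') ≤ ∑ j : Fin n, F (rank c (x j) i)) ↔
    (∀ i' : Fin m, ∑ j : Fin n, A (rank c (x j) i') ≤ ∑ j : Fin n, A (rank c (x j) i)) := by
  -- B is the (m-t)-approval score
  set B : ℕ → ℕ := fun ρ => if ρ < m - t then 1 else 0 with hB
  have hFAB : ∀ ρ, F ρ = A ρ + B ρ := by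
    intro ρ
    rw [hF, hA, hB]
    simp only
    split_ifs <;> omega
  -- any middle candidate always has rank < m - t
  have hmid : ∀ (j : Fin m), t ≤ j.val → j.val < m - t → ∀ y : ℝ, rank c y j < m - t := by
    intro j hj1 hj2 y
    rcases le_or_gt y (c j) with h | h
    · have := rank_le_left c hc y j h
      omega
    · have := rank_le_right c hc y j h.le
      omega
  -- so their total B-score equals n
  have hBsum : ∀ (j : Fin m), t ≤ j.val → j.val < m - t →
      ∑ v : Fin n, B (rank c (x v) j) = n := by
    intro j hj1 hj2
    have : ∀ v : Fin n, B (rank c (x v) j) = 1 := by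
      intro v
      simp only [hB, if_pos (hmid j hj1 hj2 (x v))]
    rw [Finset.sum_congr rfl fun v _ => this v]
    simp
  have hBle : ∀ (j : Fin m), ∑ v : Fin n, B (rank c (x v) j) ≤ n := by
    intro j
    calc ∑ v : Fin n, B (rank c (x v) j) ≤ ∑ _v : Fin n, 1 := by
          apply Finset.sum_le_sum
          intro v _
          simp only [hB]; split_ifs <;> omega
      _ = n := by simp
  have hFsplit : ∀ (j : Fin m), ∑ v : Fin n, F (rank c (x v) j)
      = ∑ v : Fin n, A (rank c (x v) j) + ∑ v : Fin n, B (rank c (x v) j) := by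
    intro j
    rw [← Finset.sum_add_distrib]
    exact Finset.sum_congr rfl fun v _ => hFAB _
  have hFi : ∑ v : Fin n, F (rank c (x v) i) = ∑ v : Fin n, A (rank c (x v) i) + n := by
    rw [hFsplit, hBsum i hi1 hi2]
  constructor
  · -- F-winner → A-winner
    intro hwin i'
    -- clamp i' into the middle zone
    have hmlt : t < m - t := by omega
    by_cases h1 : i'.val < t
    · -- use candidate at position t
      have htm : t < m := by omega
      set jt : Fin m := ⟨t, htm⟩ with hjt
      have hkey : ∀ v : Fin n, A (rank c (x v) i') ≤ A (rank c (x v) jt) := by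
        intro v
        rw [hA, hA]
        split_ifs with ha hb
        · omega
        · -- rank i' < k but rank jt ≥ k: contradiction
          exfalso
          rcases le_or_gt (x v) (c jt) with hy | hy
          · have h5 := rank_le_left c hc (x v) jt hy
            have h6 : jt.val = t := rfl
            rw [h6] at h5
            omega
          · have hij : i' < jt := by
              rw [Fin.lt_def]; exact h1
            have := rank_le_of_right c hc (x v) hij hy
            omega
        · omega
        · omega
      have hAle : ∑ v : Fin n, A (rank c (x v) i') ≤ ∑ v : Fin n, A (rank c (x v) jt) :=
        Finset.sum_le_sum fun v _ => hkey v
      have hjt1 : t ≤ jt.val := le_refl t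
      have hjt2 : jt.val < m - t := hmlt
      have h2 := hwin jt
      rw [hFsplit jt, hBsum jt hjt1 hjt2, hFi] at h2
      omega
    · by_cases h2 : m - t ≤ i'.val
      · -- use candidate at position m - t - 1
        have htm : m - t - 1 < m := by omega
        set jb : Fin m := ⟨m - t - 1, htm⟩ with hjb
        have hkey : ∀ v : Fin n, A (rank c (x v) i') ≤ A (rank c (x v) jb) := by
          intro v
          rw [hA, hA]
          split_ifs with ha hb
          · omega
          · exfalso
            rcases le_or_gt (c jb) (x v) with hy | hy
            · have h5 := rank_le_right c hc (x v) jb hy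
              have h6 : jb.val = m - t - 1 := rfl
              rw [h6] at h5
              omega
            · have hij : jb < i' := by
                rw [Fin.lt_def]
                simp only [hjb]
                omega
              have := rank_le_of_left c hc (x v) hij hy
              omega
          · omega
          · omega
        have hAle : ∑ v : Fin n, A (rank c (x v) i') ≤ ∑ v : Fin n, A (rank c (x v) jb) :=
          Finset.sum_le_sum fun v _ => hkey v
        have hjb1 : t ≤ jb.val := by simp only [hjb]; omega
        have hjb2 : jb.val < m - t := by simp only [hjb]; omega
        have h3 := hwin jb
        rw [hFsplit jb, hBsum jb hjb1 hjb2, hFi] at h3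
        omega
      · -- i' is itself middle
        have h3 := hwin i'
        rw [hFsplit i', hBsum i' (by omega) (by omega), hFi] at h3
        omega
  · -- A-winner → F-winner
    intro hwin i'
    rw [hFsplit i', hFi]
    have := hwin i'
    have := hBle i'
    omega
end
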